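/- arXiv:2311.10318 — 2 statements merged into one kernel-verified Lean document; each statement's English description precedes it below -/
import Mathlib

section
/- Let ℓ : ℝ → ℝ be differentiable with derivative ℓ' that is L-Lipschitz (L ≥ 0). Suppose a, a⁺ ∈ ℝ satisfy a⁺ = a - η * M * ℓ'(a) with η ≥ 0, M ≥ 0 and L * η * M ≤ 1/2. Then ℓ'(a) * ℓ'(a⁺) ≥ (3/4 - L² * η² * M²) * (ℓ'(a))² ≥ (1/2) * (ℓ'(a))². -/
/-- Key inequality for sufficient descent: after the one-step update
`a⁺ = a - η M ℓ'(a)` with `L η M ≤ 1/2`, we have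
`ℓ'(a) ℓ'(a⁺) ≥ (3/4 - L²η²M²) ℓ'(a)² ≥ (1/2) ℓ'(a)²`. -/
theorem stmt_2 (ℓ : ℝ → ℝ) (L η M a : ℝ)
    (hdiff : Differentiable ℝ ℓ)
    (hlip : LipschitzWith (Real.toNNReal L) (deriv ℓ))
    (hL : 0 ≤ L) (hη : 0 ≤ η) (hM : 0 ≤ M)
    (hstep : L * η * M ≤ 1 / 2) :
    deriv ℓ a * deriv ℓ (a - η * M * deriv ℓ a)
        ≥ (3 / 4 - L ^ 2 * η ^ 2 * M ^ 2) * (deriv ℓ a) ^ 2 ∧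
    (3 / 4 - L ^ 2 * η ^ 2 * M ^ 2) * (deriv ℓ a) ^ 2
        ≥ (1 / 2) * (deriv ℓ a) ^ 2 := by
  set g := deriv ℓ a with hg
  set d := deriv ℓ (a - η * M * g) with hd
  have hdist := hlip.dist_le_mul (a - η * M * g) a
  rw [Real.coe_toNNReal L hL] at hdist
  simp only [Real.dist_eq] at hdist
  have h1 : |d - g| ≤ L * (η * M * |g|) := by
    calc |d - g| ≤ L * |a - η * M * g - a| := hdist
    _ = L * (η * M * |g|) := by
        rw [show a - η * M * g - a = -(η * M * g) by ring, abs_neg, abs_mul,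
          abs_of_nonneg (mul_nonneg hη hM)]
  have h2 : |g * (d - g)| ≤ L * η * M * g ^ 2 := by
    rw [abs_mul]
    calc |g| * |d - g| ≤ |g| * (L * (η * M * |g|)) :=
          mul_le_mul_of_nonneg_left h1 (abs_nonneg g)
    _ = L * η * M * |g| ^ 2 := by ring
    _ = L * η * M * g ^ 2 := by rw [sq_abs]
  have h3 := abs_le.mp h2
  have hs : L * η * M ≥ 0 := by positivity
  constructor
  · nlinarith [h3.1, sq_nonneg g, sq_nonneg (L * η * M - 1/2), sq_nonneg ((L*η*M) * g)]
  · nlinarith [sq_nonneg g, sq_nonneg (L * η * M)]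
end

section
/- Let d ≥ 1, and for each i ∈ {1,…,d} let ℓᵢ : ℝ → ℝ be convex and differentiable with L-Lipschitz derivative, let Mᵢ ∈ (0, M_K], and aᵢ⁺ = aᵢ - ηᵢ * Mᵢ * ℓᵢ'(aᵢ) with 0 < ηᵢ ≤ 1/(2 L M_K). Set η̃ = minᵢ ηᵢ. Then ∑ᵢ (ℓᵢ(aᵢ⁺) - ℓᵢ(aᵢ)) ≤ -(η̃/2) * ∑ᵢ Mᵢ * (ℓᵢ'(aᵢ))². -/
/-!
Each learner's loss is `L`-smooth, so along the gradient step `x ↦ x - s ℓ'(x)` it obeys the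
descent lemma `ℓ(x - s ℓ'(x)) - ℓ(x) ≤ -s ℓ'(x)² (1 - L s / 2)`. The step size `s = ηᵢ Mᵢ` satisfies
`L s ≤ 1/2`, so each learner's loss drops by at least `(ηᵢ Mᵢ / 2) ℓᵢ'(aᵢ)²`, and replacing `ηᵢ` by
the smallest rate and summing over the learners gives the bound.
-/

open NNReal

theorem LipschitzWith.sub_le_deriv_mul_add_sq {f : ℝ → ℝ} {K : ℝ≥0} (hf : Differentiable ℝ f)
    (hlip : LipschitzWith K (deriv f)) (x y : ℝ) :
    f y - f x ≤ deriv f x * (y - x) + K / 2 * (y - x) ^ 2 := by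
  set φ : ℝ → ℝ := fun z ↦ f z - deriv f x * (z - x) - K / 2 * (z - x) ^ 2
  have hφ : ∀ z, HasDerivAt φ (deriv f z - deriv f x - K * (z - x)) z := by
    intro z
    exact (((hf z).hasDerivAt.sub (((hasDerivAt_id' z).sub_const x).const_mul (deriv f x))).sub
      ((((hasDerivAt_id' z).sub_const x).pow 2).const_mul ((K : ℝ) / 2))).congr_deriv (by ring)
  have hφd : Differentiable ℝ φ := fun z ↦ (hφ z).differentiableAt
  have hgap : ∀ z, |deriv f z - deriv f x| ≤ K * |z - x| := by
    intro z
    simpa [Real.dist_eq] using hlip.dist_le_mul z x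
  -- `φ'` is `≤ 0` right of `x` and `≥ 0` left of it, so `φ` is maximal at `x`.
  suffices φ y ≤ φ x by simp only [φ] at this; linarith
  rcases le_total x y with hxy | hyx
  · refine antitoneOn_of_deriv_nonpos (convex_Ici x) hφd.continuous.continuousOn
      hφd.differentiableOn (fun z hz ↦ ?_) Set.self_mem_Ici hxy hxy
    rw [interior_Ici, Set.mem_Ioi] at hz
    rw [(hφ z).deriv]
    have := (abs_le.mp (hgap z)).2
    rw [abs_of_pos (sub_pos.mpr hz)] at this
    linarith
  · refine monotoneOn_of_deriv_nonneg (convex_Iic x) hφd.continuous.continuousOn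
      hφd.differentiableOn (fun z hz ↦ ?_) hyx Set.self_mem_Iic hyx
    rw [interior_Iic, Set.mem_Iio] at hz
    rw [(hφ z).deriv]
    have := (abs_le.mp (hgap z)).1
    rw [abs_of_neg (sub_neg.mpr hz)] at this
    linarith

theorem LipschitzWith.sub_le_of_gradient_step {f : ℝ → ℝ} {K : ℝ≥0} (hf : Differentiable ℝ f)
    (hlip : LipschitzWith K (deriv f)) {s : ℝ} (hs : 0 ≤ s) (hKs : K * s ≤ 1) (x : ℝ) :
    f (x - s * deriv f x) - f x ≤ -(s / 2) * deriv f x ^ 2 := by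
  have := hlip.sub_le_deriv_mul_add_sq hf x (x - s * deriv f x)
  have hstep := mul_le_mul_of_nonneg_right hKs (mul_nonneg hs (sq_nonneg (deriv f x)))
  nlinarith

theorem stmt_4_general {d : ℕ} (hd : 1 ≤ d) (ℓ : Fin d → ℝ → ℝ) (L MK : ℝ)
    (M η a : Fin d → ℝ)
    (hdiff : ∀ i, Differentiable ℝ (ℓ i))
    (hlip : ∀ i, LipschitzWith (Real.toNNReal L) (deriv (ℓ i)))
    (hL : 0 < L) (hMK : 0 < MK)
    (hM : ∀ i, 0 < M i ∧ M i ≤ MK)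
    (hη : ∀ i, 0 < η i ∧ η i ≤ 1 / (2 * L * MK)) :
    ∑ i, (ℓ i (a i - η i * M i * deriv (ℓ i) (a i)) - ℓ i (a i))
      ≤ -((Finset.univ.inf' ⟨⟨0, hd⟩, Finset.mem_univ _⟩ η) / 2)
          * ∑ i, M i * (deriv (ℓ i) (a i)) ^ 2 := by
  rw [Finset.mul_sum]
  refine Finset.sum_le_sum fun i _ ↦ ?_
  obtain ⟨hMi, hMiK⟩ := hM i
  obtain ⟨hηi, hηiK⟩ := hη i
  have hstep : (L.toNNReal : ℝ) * (η i * M i) ≤ 1 := by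
    rw [Real.coe_toNNReal L hL.le]
    have := (le_div_iff₀ (by positivity)).1 hηiK
    nlinarith [mul_le_mul_of_nonneg_left hMiK (mul_pos hL hηi).le]
  have hmin : Finset.univ.inf' ⟨⟨0, hd⟩, Finset.mem_univ _⟩ η ≤ η i :=
    Finset.inf'_le _ (Finset.mem_univ i)
  calc _ ≤ -(η i * M i / 2) * deriv (ℓ i) (a i) ^ 2 :=
        (hlip i).sub_le_of_gradient_step (hdiff i) (by positivity) hstep (a i)
    _ ≤ _ := by
      nlinarith [mul_le_mul_of_nonneg_right hmin (mul_nonneg hMi.le (sq_nonneg (deriv (ℓ i) (a i))))]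

/-- Multi-learner sufficient descent: `d` learners each take one gradient step
on their own convex `L`-smooth loss; the total loss decreases by at least
`(η̃/2) ∑ᵢ Mᵢ ℓᵢ'(aᵢ)²` where `η̃` is the smallest learning rate. -/
theorem stmt_4 {d : ℕ} (hd : 1 ≤ d) (ℓ : Fin d → ℝ → ℝ) (L MK : ℝ)
    (M η a : Fin d → ℝ)
    (hconv : ∀ i, ConvexOn ℝ Set.univ (ℓ i))
    (hdiff : ∀ i, Differentiable ℝ (ℓ i))
    (hlip : ∀ i, LipschitzWith (Real.toNNReal L) (deriv (ℓ i)))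
    (hL : 0 < L) (hMK : 0 < MK)
    (hM : ∀ i, 0 < M i ∧ M i ≤ MK)
    (hη : ∀ i, 0 < η i ∧ η i ≤ 1 / (2 * L * MK)) :
    ∑ i, (ℓ i (a i - η i * M i * deriv (ℓ i) (a i)) - ℓ i (a i))
      ≤ -((Finset.univ.inf' ⟨⟨0, hd⟩, Finset.mem_univ _⟩ η) / 2)
          * ∑ i, M i * (deriv (ℓ i) (a i)) ^ 2 :=
  stmt_4_general hd ℓ L MK M η a hdiff hlip hL hMK hM hη
end
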